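/- arXiv:2010.12460 — 2 statements merged into one kernel-verified Lean document; each statement's English description precedes it below -/
import Mathlib

section
/- For a random variable R on [0,1] with CDF F, the function Q(b) = ∫_a^b (b-r)(r-a) dF(r) + ∫_b^c (c-r)(r-b) dF(r) (for fixed 0 ≤ a < c ≤ 1) is convex in b on [a,c], with second derivative (c-a)·p(b), where p is the density of R. -/
/-!
Both pieces of `Q` are of the form `b ↦ ∫ r in x₀..b, (b - r) * g r` with `g` continuous
(the second one after reversing its bounds, with `g r = (c - r) * p r`). Such a function is the
iterated antiderivative of `g` vanishing at `x₀`, so its second derivative is `g b`. Hence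
`Q'' b = (b - a) p b + (c - b) p b = (c - a) p b ≥ 0`, and `Q` is convex on all of `ℝ`.
-/

open intervalIntegral

section IteratedAntiderivative

variable {f : ℝ → ℝ}

theorem integral_sub_mul_eq (hf : Continuous f) (x₀ b : ℝ) :
    ∫ r in x₀..b, (b - r) * f r = b * (∫ r in x₀..b, f r) - ∫ r in x₀..b, r * f r := by
  have hbf : Continuous fun r => b * f r := by fun_prop
  have hrf : Continuous fun r => r * f r := by fun_prop
  rw [← integral_const_mul,
    ← integral_sub (hbf.intervalIntegrable _ _) (hrf.intervalIntegrable _ _)]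
  exact integral_congr fun r _ => by ring

theorem hasDerivAt_integral_sub_mul (hf : Continuous f) (x₀ b : ℝ) :
    HasDerivAt (fun b => ∫ r in x₀..b, (b - r) * f r) (∫ r in x₀..b, f r) b := by
  simp_rw [integral_sub_mul_eq hf x₀]
  have hF := (hf.integral_hasStrictDerivAt x₀ b).hasDerivAt
  have hG := ((continuous_id.mul hf).integral_hasStrictDerivAt x₀ b).hasDerivAt
  exact (((hasDerivAt_id b).mul hF).sub hG).congr_deriv (by simp)

end IteratedAntiderivative

theorem stmt0_general (p : ℝ → ℝ) (a c : ℝ) (hac : a < c)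
    (hpcont : Continuous p) (hp0 : ∀ x, 0 ≤ p x)
    (Q : ℝ → ℝ)
    (hQ : ∀ b, Q b = (∫ r in a..b, (b - r) * (r - a) * p r) +
      ∫ r in b..c, (c - r) * (r - b) * p r) :
    ConvexOn ℝ (Set.Icc a c) Q ∧
      ∀ b ∈ Set.Ioo a c, deriv (deriv Q) b = (c - a) * p b := by
  have hleft : Continuous fun r => (r - a) * p r := by fun_prop
  have hright : Continuous fun r => (c - r) * p r := by fun_prop
  have hQ_eq : Q = fun b => (∫ r in a..b, (b - r) * ((r - a) * p r)) +
      ∫ r in c..b, (b - r) * ((c - r) * p r) := by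
    funext b
    rw [hQ b, integral_symm c b, ← integral_neg]
    congr 1 <;> exact integral_congr fun r _ => by ring
  have hQ' : ∀ b, HasDerivAt Q
      ((∫ r in a..b, (r - a) * p r) + ∫ r in c..b, (c - r) * p r) b := fun b =>
    hQ_eq ▸ (hasDerivAt_integral_sub_mul hleft a b).add (hasDerivAt_integral_sub_mul hright c b)
  have hQ'' : ∀ b, HasDerivAt (deriv Q) ((c - a) * p b) b := by
    intro b
    rw [funext fun b => (hQ' b).deriv]
    exact ((hleft.integral_hasStrictDerivAt a b).hasDerivAt.add
      (hright.integral_hasStrictDerivAt c b).hasDerivAt).congr_deriv (by ring)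
  have hQ_convex : ConvexOn ℝ Set.univ Q := by
    refine convexOn_univ_of_deriv2_nonneg (fun b => (hQ' b).differentiableAt)
      (fun b => (hQ'' b).differentiableAt) fun b => ?_
    rw [Function.iterate_succ_apply', Function.iterate_one, (hQ'' b).deriv]
    exact mul_nonneg (sub_nonneg.mpr hac.le) (hp0 b)
  exact ⟨hQ_convex.subset (Set.subset_univ _) (convex_Icc a c), fun b _ => (hQ'' b).deriv⟩

/-- For a random variable R on [0,1] with CDF F having continuous
density p = F', the function
Q(b) = ∫_a^b (b-r)(r-a) dF(r) + ∫_b^c (c-r)(r-b) dF(r)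
(for fixed 0 ≤ a < c ≤ 1) is convex in b on [a,c], with second derivative
(c-a)·p(b). -/
theorem stmt0 (F p : ℝ → ℝ) (a c : ℝ) (ha : 0 ≤ a) (hac : a < c) (hc : c ≤ 1)
    (hF : ∀ x, HasDerivAt F (p x) x) (hpcont : Continuous p) (hp0 : ∀ x, 0 ≤ p x)
    (Q : ℝ → ℝ)
    (hQ : ∀ b, Q b = (∫ r in a..b, (b - r) * (r - a) * p r) +
      ∫ r in b..c, (c - r) * (r - b) * p r) :
    ConvexOn ℝ (Set.Icc a c) Q ∧
      ∀ b ∈ Set.Ioo a c, deriv (deriv Q) b = (c - a) * p b :=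
  stmt0_general p a c hac hpcont hp0 Q hQ
end

section
/- Let v ∈ ℝ^d be nonzero, q ≥ 1, r_i = |v_i|/‖v‖_q. Under stochastic quantization with lowest level ℓ_1 (where each coordinate with r_i ∈ [0, ℓ_1] is set to zero with probability 1 - r_i/ℓ_1, and coordinates with r_i ≥ ℓ_1 are always nonzero), the expected number of nonzero quantized coordinates is at most ℓ_1^{-q} + d^{1-1/q}/ℓ_1. -/
/-!
Normalise so that `∑ rᵢ^q ≤ 1`. Each coordinate with `rᵢ ≥ ℓ₁` contributes at least `ℓ₁^q` to
this sum, so there are at most `ℓ₁^{-q}` of them (a Markov-type count). The remaining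
coordinates contribute `∑ rᵢ/ℓ₁ ≤ ‖r‖₁/ℓ₁`, and Hölder's inequality against the constant
vector `1` gives `‖r‖₁ ≤ d^{1-1/q} ‖r‖_q ≤ d^{1-1/q}`.
-/

open Finset

section UnitBall

variable {ι : Type*} [Fintype ι] {r : ι → ℝ} {q : ℝ}

theorem card_filter_le_rpow_neg_of_sum_rpow_le_one (hr : ∀ i, 0 ≤ r i) (hq : 0 < q)
    (hsum : ∑ i, r i ^ q ≤ 1) {l : ℝ} (hl : 0 < l) :
    ((univ.filter fun i => l ≤ r i).card : ℝ) ≤ l ^ (-q) := by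
  rw [Real.rpow_neg hl.le, ← one_div, le_div_iff₀ (Real.rpow_pos_of_pos hl q)]
  calc ((univ.filter fun i => l ≤ r i).card : ℝ) * l ^ q
      ≤ ∑ i ∈ univ.filter (fun i => l ≤ r i), r i ^ q := by
        rw [← nsmul_eq_mul]
        exact card_nsmul_le_sum _ _ _ fun i hi =>
          Real.rpow_le_rpow hl.le (mem_filter.mp hi).2 hq.le
    _ ≤ ∑ i, r i ^ q :=
        sum_le_sum_of_subset_of_nonneg (filter_subset _ _) fun i _ _ => Real.rpow_nonneg (hr i) _
    _ ≤ 1 := hsum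

theorem sum_le_card_rpow_of_sum_rpow_le_one (hr : ∀ i, 0 ≤ r i) (hq : 1 ≤ q)
    (hsum : ∑ i, r i ^ q ≤ 1) :
    ∑ i, r i ≤ (Fintype.card ι : ℝ) ^ (1 - 1 / q) := by
  have holder := Real.inner_le_weight_mul_Lp_of_nonneg univ hq (fun _ => 1) r
    (fun _ => zero_le_one) hr
  simp only [one_mul, sum_const, card_univ, nsmul_eq_mul, mul_one] at holder
  calc ∑ i, r i
      ≤ (Fintype.card ι : ℝ) ^ (1 - q⁻¹) * (∑ i, r i ^ q) ^ q⁻¹ := holder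
    _ ≤ (Fintype.card ι : ℝ) ^ (1 - q⁻¹) * 1 := by
        gcongr
        exact Real.rpow_le_one (sum_nonneg fun i _ => Real.rpow_nonneg (hr i) _) hsum
          (inv_nonneg.mpr (by linarith))
    _ = (Fintype.card ι : ℝ) ^ (1 - 1 / q) := by rw [mul_one, one_div]

end UnitBall

theorem sum_rpow_div_lpNorm_le_one {ι : Type*} [Fintype ι] (v : ι → ℝ) {q : ℝ} (hq : q ≠ 0) :
    ∑ i, (|v i| / (∑ j, |v j| ^ q) ^ (1 / q)) ^ q ≤ 1 := by
  have hS : 0 ≤ ∑ j, |v j| ^ q := sum_nonneg fun j _ => Real.rpow_nonneg (abs_nonneg _) _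
  simp_rw [Real.div_rpow (abs_nonneg _) (Real.rpow_nonneg hS _), ← Real.rpow_mul hS,
    one_div_mul_cancel hq, Real.rpow_one, ← sum_div]
  exact div_self_le_one _

theorem stmt10_general (d : ℕ) (v : Fin d → ℝ) (q l1 : ℝ) (hq : 1 ≤ q)
    (hl : 0 < l1)
    (r : Fin d → ℝ) (hr : ∀ i, r i = |v i| / (∑ j, |v j| ^ q) ^ (1 / q)) :
    ((Finset.univ.filter fun i => l1 ≤ r i).card : ℝ)
        + ∑ i ∈ Finset.univ.filter (fun i => r i < l1), r i / l1
      ≤ l1 ^ (-q) + (d : ℝ) ^ (1 - 1 / q) / l1 := by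
  have hq0 : 0 < q := one_pos.trans_le hq
  have hr_nonneg : ∀ i, 0 ≤ r i := fun i => by rw [hr i]; positivity
  have hsum : ∑ i, r i ^ q ≤ 1 := by
    simpa only [hr] using sum_rpow_div_lpNorm_le_one v hq0.ne'
  have hsmall : ∑ i ∈ univ.filter (fun i => r i < l1), r i / l1
      ≤ (d : ℝ) ^ (1 - 1 / q) / l1 := by
    rw [← sum_div]
    gcongr
    calc ∑ i ∈ univ.filter (fun i => r i < l1), r i
        ≤ ∑ i, r i :=
          sum_le_sum_of_subset_of_nonneg (filter_subset _ _) fun i _ _ => hr_nonneg i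
      _ ≤ (d : ℝ) ^ (1 - 1 / q) := by
          simpa using sum_le_card_rpow_of_sum_rpow_le_one hr_nonneg hq hsum
  linarith [card_filter_le_rpow_neg_of_sum_rpow_le_one hr_nonneg hq0 hsum hl]

/-- Let v ∈ ℝ^d be nonzero, q ≥ 1, r_i = |v_i|/‖v‖_q.  Under
stochastic quantization with lowest level ℓ₁ (each coordinate with
r_i ∈ [0, ℓ₁) is zero with probability 1 - r_i/ℓ₁, coordinates with r_i ≥ ℓ₁
are always nonzero), the expected number of nonzero quantized coordinates,
#{i : r_i ≥ ℓ₁} + Σ_{i : r_i < ℓ₁} r_i/ℓ₁, is at most ℓ₁^{-q} + d^{1-1/q}/ℓ₁. -/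
theorem stmt10 (d : ℕ) (v : Fin d → ℝ) (hv : v ≠ 0) (q l1 : ℝ) (hq : 1 ≤ q)
    (hl : 0 < l1) (hl1 : l1 ≤ 1)
    (r : Fin d → ℝ) (hr : ∀ i, r i = |v i| / (∑ j, |v j| ^ q) ^ (1 / q)) :
    ((Finset.univ.filter fun i => l1 ≤ r i).card : ℝ)
        + ∑ i ∈ Finset.univ.filter (fun i => r i < l1), r i / l1
      ≤ l1 ^ (-q) + (d : ℝ) ^ (1 - 1 / q) / l1 :=
  stmt10_general d v q l1 hq hl r hr
end
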